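/- arXiv:0806.4140 — 6 statements merged into one kernel-verified Lean document; each statement's English description precedes it below -/
import Mathlib

section
/- For all real z with 0 ≤ z ≤ 1 and every real κ ≥ 1, one has (1 - z)^(2κ) ≤ 1 - 2κ·z^(2κ-1) + (2κ-1)·z^(2κ). -/
/-!
Write `p = 2κ ≥ 2`. Since `1 - z ∈ [0, 1]`, `(1 - z) ^ p ≤ (1 - z) ^ 2 = 1 - z (2 - z)`, so it suffices that
`p z ^ (p - 1) - (p - 1) z ^ p ≤ z (2 - z)`. Factoring out `z ^ (p - 2) * z` and putting `u = 1 - z`,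
`s = p - 2`, this is `(1 - u) ^ s (1 + (s + 1) u) ≤ 1 + u`, which follows from `1 - u ≤ exp (-u)` and
`1 + s u ≤ exp (s u)`.
-/

open Real

theorem one_sub_rpow_mul_le {u s : ℝ} (hu0 : 0 ≤ u) (hu1 : u ≤ 1) (hs : 0 ≤ s) :
    (1 - u) ^ s * (1 + (s + 1) * u) ≤ 1 + u := by
  have h_base : (1 - u) ^ s ≤ exp (-(s * u)) := by
    rw [show -(s * u) = -u * s by ring, exp_mul]
    exact rpow_le_rpow (by linarith) (one_sub_le_exp_neg u) hs
  have h_lin : 1 + (s + 1) * u ≤ (1 + u) * exp (s * u) := by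
    nlinarith [add_one_le_exp (s * u), mul_nonneg hs (mul_nonneg hu0 hu0)]
  calc (1 - u) ^ s * (1 + (s + 1) * u)
      ≤ exp (-(s * u)) * ((1 + u) * exp (s * u)) :=
        mul_le_mul h_base h_lin (by positivity) (exp_pos _).le
    _ = 1 + u := by rw [exp_neg]; field_simp

theorem mul_rpow_sub_one_sub_le {z p : ℝ} (hz0 : 0 ≤ z) (hz1 : z ≤ 1) (hp : 2 ≤ p) :
    p * z ^ (p - 1) - (p - 1) * z ^ p ≤ z * (2 - z) := by
  have h_pow_sub_one : z ^ (p - 1) = z ^ (p - 2) * z := by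
    rw [show p - 1 = (p - 2) + 1 by ring, rpow_add' hz0 (by linarith), rpow_one]
  have h_pow : z ^ p = z ^ (p - 2) * z ^ 2 := by
    rw [← rpow_two, ← rpow_add' hz0 (by linarith), sub_add_cancel]
  have key := one_sub_rpow_mul_le (u := 1 - z) (by linarith) (by linarith) (by linarith : 0 ≤ p - 2)
  rw [sub_sub_cancel, show p - 2 + 1 = p - 1 by ring] at key
  rw [h_pow_sub_one, h_pow]
  nlinarith [mul_le_mul_of_nonneg_left key hz0]

theorem stmt_0 (z κ : ℝ) (hz0 : 0 ≤ z) (hz1 : z ≤ 1) (hκ : 1 ≤ κ) :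
    (1 - z) ^ (2 * κ) ≤ 1 - 2 * κ * z ^ (2 * κ - 1) + (2 * κ - 1) * z ^ (2 * κ) := by
  have h_sq : (1 - z) ^ (2 * κ) ≤ (1 - z) ^ 2 := by
    rw [← rpow_two]
    exact rpow_le_rpow_of_exponent_ge' (by linarith) (by linarith) (by norm_num) (by linarith)
  nlinarith [mul_rpow_sub_one_sub_le hz0 hz1 (by linarith : 2 ≤ 2 * κ)]
end

section
/- For all real z ≥ 0 and every real κ ≥ 1, one has (1 + z)^(2κ) ≥ 1 + 2κ·z^(2κ-1) + z^(2κ). -/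
/-!
Write `p = 2κ ≥ 2`, `a = z ^ (p - 2)` and factor `(1 + z) ^ p = (1 + z) ^ (p - 1) * (1 + z)`.
Two lower bounds for `(1 + z) ^ (p - 1)` are available: the tangent-line (Bernoulli) bound
`z ^ (p - 1) + (p - 1) * z ^ (p - 2)` and the superadditivity bound `1 + z ^ (p - 1)`.
After multiplying by `1 + z`, the first one suffices when `(p - 1) * a ≥ 1`, the second one
when `(p - 1) * a ≤ 1`.
-/

open Real

lemma rpow_add_mul_rpow_sub_one_mul_le_add_rpow {x y q : ℝ} (hx : 0 < x) (hy : 0 ≤ y)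
    (hq : 1 ≤ q) : x ^ q + q * x ^ (q - 1) * y ≤ (x + y) ^ q := by
  have hbernoulli : 1 + q * (y / x) ≤ (1 + y / x) ^ q :=
    one_add_mul_self_le_rpow_one_add (by linarith [div_nonneg hy hx.le]) hq
  calc x ^ q + q * x ^ (q - 1) * y = x ^ q * (1 + q * (y / x)) := by
        rw [rpow_sub_one hx.ne']
        field_simp
    _ ≤ x ^ q * (1 + y / x) ^ q := by gcongr
    _ = (x + y) ^ q := by
        rw [← mul_rpow hx.le (by positivity)]
        congr 1
        field_simp

lemma one_add_mul_rpow_sub_one_add_rpow_le_one_add_rpow {z p : ℝ} (hz : 0 ≤ z) (hp : 2 ≤ p) :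
    1 + p * z ^ (p - 1) + z ^ p ≤ (1 + z) ^ p := by
  rcases hz.eq_or_lt with rfl | hz
  · rw [zero_rpow (by linarith), zero_rpow (by linarith)]
    simp
  set a := z ^ (p - 2) with ha
  have ha_nonneg : 0 ≤ a := rpow_nonneg hz.le _
  have hpow_sub_one : z ^ (p - 1) = a * z := by
    rw [ha, ← rpow_add_one hz.ne']
    ring_nf
  have hpow : z ^ p = a * z ^ 2 := by
    rw [ha, ← rpow_natCast, ← rpow_add hz]
    norm_num
  have hsplit : (1 + z) ^ p = (1 + z) ^ (p - 1) * (1 + z) := by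
    rw [← rpow_add_one (by linarith)]
    ring_nf
  rw [hpow_sub_one, hpow, hsplit]
  rcases le_total 1 ((p - 1) * a) with hpa | hpa
  · have htangent : a * z + (p - 1) * a ≤ (1 + z) ^ (p - 1) := by
      have := rpow_add_mul_rpow_sub_one_mul_le_add_rpow hz zero_le_one (q := p - 1) (by linarith)
      rwa [hpow_sub_one, show p - 1 - 1 = p - 2 by ring, ← ha, mul_one, add_comm z] at this
    nlinarith
  · have hsuperadd : 1 + a * z ≤ (1 + z) ^ (p - 1) := by
      have := add_rpow_le_rpow_add zero_le_one hz.le (p := p - 1) (by linarith)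
      rwa [one_rpow, hpow_sub_one] at this
    nlinarith

theorem stmt_1 (z κ : ℝ) (hz : 0 ≤ z) (hκ : 1 ≤ κ) :
    1 + 2 * κ * z ^ (2 * κ - 1) + z ^ (2 * κ) ≤ (1 + z) ^ (2 * κ) :=
  one_add_mul_rpow_sub_one_add_rpow_le_one_add_rpow hz (by linarith)
end

section
/- Let a, b, c > 0 be reals and κ ≥ 1 a real. If a ≤ b + c·(a^(1/(2κ)) + b^(1/(2κ))), then a^(1/(2κ)) ≤ (1 + (2κ-1)^(1/(2κ-1)))·(c/(2κ))^(1/(2κ-1)) + b^(1/(2κ)). -/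
/-!
Put `p = 2κ`, `x = a ^ (1/p)`, `y = b ^ (1/p)`, so the hypothesis reads `x ^ p ≤ y ^ p + c (x + y)`.
If `u = x - y` were larger than the constant `K` of the claim, the second-order Bernoulli
inequality `(u + y) ^ p ≥ u ^ p + p u ^ (p-1) y + y ^ p` would give `x ^ p > y ^ p + c u + 2 c y`,
because `u ^ (p-1) > K ^ (p-1) ≥ c`. The last inequality is where the constant comes from:
`(1 + (p-1) ^ (1/(p-1))) ^ (p-1) ≥ 1 + (p-1) = p` by superadditivity of `t ↦ t ^ (p-1)`.
-/

open Real

lemma rpow_mul_add_le_mul_add_rpow {u y q : ℝ} (hu : 0 < u) (hy : 0 ≤ y) (hq : 1 ≤ q) :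
    u ^ q * (u + q * y) ≤ u * (u + y) ^ q := by
  have hyu : 0 ≤ y / u := div_nonneg hy hu.le
  have hbern := one_add_mul_self_le_rpow_one_add (by linarith : -1 ≤ y / u) hq
  have hsplit : u + y = u * (1 + y / u) := by field_simp
  rw [hsplit, mul_rpow hu.le (by positivity)]
  calc u ^ q * (u + q * y) = u * (u ^ q * (1 + q * (y / u))) := by field_simp
    _ ≤ u * (u ^ q * (1 + y / u) ^ q) := by gcongr

lemma rpow_add_mul_rpow_sub_one_add_rpow_le {u y p : ℝ} (hu : 0 < u) (hy : 0 ≤ y) (hp : 2 ≤ p) :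
    u ^ p + p * u ^ (p - 1) * y + y ^ p ≤ (u + y) ^ p := by
  have hq : 1 ≤ p - 1 := by linarith
  have hbern := rpow_mul_add_le_mul_add_rpow hu hy hq
  have hsuper := add_rpow_le_rpow_add hu.le hy hq
  have hpow : ∀ t : ℝ, 0 ≤ t → t ^ p = t ^ (p - 1) * t := fun t ht => by
    rw [← rpow_add_one' ht (by linarith), sub_add_cancel]
  rw [hpow u hu.le, hpow y hy, hpow (u + y) (by positivity)]
  nlinarith [mul_le_mul_of_nonneg_right hsuper hy]

lemma le_add_of_rpow_le_rpow_add_mul_add {p c x y K : ℝ} (hp : 2 ≤ p) (hy : 0 ≤ y) (hK : 0 ≤ K)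
    (hcK : c ≤ K ^ (p - 1)) (h : x ^ p ≤ y ^ p + c * (x + y)) : x ≤ K + y := by
  by_contra! hxK
  set u := x - y
  have hKu : K < u := by linarith
  have hu : 0 < u := hK.trans_lt hKu
  have hcu : c < u ^ (p - 1) := hcK.trans_lt (rpow_lt_rpow hK hKu (by linarith))
  have hbern := rpow_add_mul_rpow_sub_one_add_rpow_le hu hy hp
  have hpow : u ^ p = u ^ (p - 1) * u := by
    rw [← rpow_add_one' hu.le (by linarith), sub_add_cancel]
  rw [show x = u + y by ring] at h
  nlinarith [mul_lt_mul_of_pos_right hcu hu, mul_le_mul_of_nonneg_right hcu.le hy,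
    mul_le_mul_of_nonneg_right hp (by positivity : 0 ≤ u ^ (p - 1) * y)]

lemma le_one_add_rpow_mul_div_rpow_sub_one {p c : ℝ} (hp : 2 ≤ p) (hc : 0 ≤ c) :
    c ≤ ((1 + (p - 1) ^ (1 / (p - 1))) * (c / p) ^ (1 / (p - 1))) ^ (p - 1) := by
  have hq : 0 < p - 1 := by linarith
  have hroot : ∀ t : ℝ, 0 ≤ t → (t ^ (1 / (p - 1))) ^ (p - 1) = t := fun t ht => by
    rw [one_div, rpow_inv_rpow ht hq.ne']
  have hconst : p ≤ (1 + (p - 1) ^ (1 / (p - 1))) ^ (p - 1) :=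
    calc p = 1 ^ (p - 1) + ((p - 1) ^ (1 / (p - 1))) ^ (p - 1) := by
          rw [one_rpow, hroot _ hq.le]; ring
      _ ≤ _ := add_rpow_le_rpow_add zero_le_one (by positivity) (by linarith)
  rw [mul_rpow (by positivity) (by positivity), hroot _ (by positivity)]
  calc c = p * (c / p) := by field_simp
    _ ≤ _ := by gcongr

theorem stmt_2 (a b c κ : ℝ) (ha : 0 < a) (hb : 0 < b) (hc : 0 < c) (hκ : 1 ≤ κ)
    (h : a ≤ b + c * (a ^ (1 / (2 * κ)) + b ^ (1 / (2 * κ)))) :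
    a ^ (1 / (2 * κ)) ≤
      (1 + (2 * κ - 1) ^ (1 / (2 * κ - 1))) * (c / (2 * κ)) ^ (1 / (2 * κ - 1))
        + b ^ (1 / (2 * κ)) := by
  have hp : 2 ≤ 2 * κ := by linarith
  have hroot : ∀ t : ℝ, 0 < t → (t ^ (1 / (2 * κ))) ^ (2 * κ) = t := fun t ht => by
    rw [one_div, rpow_inv_rpow ht.le (by positivity)]
  have hK : 0 ≤ (1 + (2 * κ - 1) ^ (1 / (2 * κ - 1))) * (c / (2 * κ)) ^ (1 / (2 * κ - 1)) := by
    have : 0 ≤ 2 * κ - 1 := by linarith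
    positivity
  refine le_add_of_rpow_le_rpow_add_mul_add hp (by positivity) hK
    (le_one_add_rpow_mul_div_rpow_sub_one hp hc.le) ?_
  rwa [hroot a ha, hroot b hb]
end

section
/- Let X be a real-valued random variable and let g : [0,∞) → ℝ be increasing and concave on [c,∞) for some c ≥ 0. Then E[g(|X|)] ≤ g(E|X| + c·P(|X| < c)). -/
open MeasureTheory

/-- Supporting line for a concave function at an interior point of `Set.Ici c`. -/
lemma aux_support_line {g : ℝ → ℝ} {c m : ℝ} (hconc : ConcaveOn ℝ (Set.Ici c) g)
    (hm : c < m) : ∃ a : ℝ, ∀ y ∈ Set.Ici c, g y ≤ g m + a * (y - m) := by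
  set S : Set ℝ := (fun x => (g m - g x) / (m - x)) '' Set.Ico c m with hS
  have hne : S.Nonempty := ⟨_, ⟨c, ⟨le_refl c, hm⟩, rfl⟩⟩
  have hbdd : BddBelow S := by
    refine ⟨(g (m + 1) - g m) / (m + 1 - m), ?_⟩
    rintro _ ⟨x, ⟨hxc, hxm⟩, rfl⟩
    exact hconc.slope_anti_adjacent hxc (by simp; linarith) hxm (by linarith)
  refine ⟨sInf S, fun y hy => ?_⟩
  rcases lt_trichotomy y m with h | h | h
  · have hmem : (g m - g y) / (m - y) ∈ S := ⟨y, ⟨hy, h⟩, rfl⟩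
    have h1 : sInf S ≤ (g m - g y) / (m - y) := csInf_le hbdd hmem
    have h2 : sInf S * (m - y) ≤ g m - g y := by
      rw [← le_div_iff₀ (by linarith)]; exact h1
    nlinarith
  · simp [h]
  · have h1 : (g y - g m) / (y - m) ≤ sInf S := by
      apply le_csInf hne
      rintro _ ⟨x, ⟨hxc, hxm⟩, rfl⟩
      exact hconc.slope_anti_adjacent hxc hy hxm h
    have h2 : g y - g m ≤ sInf S * (y - m) := by
      rw [← div_le_iff₀ (by linarith)]; exact h1
    linarith

theorem stmt_5 {Ω : Type*} [MeasurableSpace Ω] (P : Measure Ω) [IsProbabilityMeasure P]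
    (X : Ω → ℝ) (g : ℝ → ℝ) (c : ℝ) (hc : 0 ≤ c)
    (hmono : MonotoneOn g (Set.Ici 0))
    (hconc : ConcaveOn ℝ (Set.Ici c) g)
    (hX : Integrable X P)
    (hgX : Integrable (fun ω => g |X ω|) P) :
    ∫ ω, g |X ω| ∂P ≤ g ((∫ ω, |X ω| ∂P) + c * (P {ω | |X ω| < c}).toReal) := by
  set Y : Ω → ℝ := fun ω => max |X ω| c with hYdef
  have hYnn : ∀ ω, 0 ≤ Y ω := fun ω => le_max_of_le_left (abs_nonneg _)
  have hYc : ∀ ω, c ≤ Y ω := fun ω => le_max_right _ _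
  have hYX : ∀ ω, |X ω| ≤ Y ω := fun ω => le_max_left _ _
  have hYint : Integrable Y P := hX.abs.sup (integrable_const c)
  -- g ∘ Y equals a max of integrable things
  have hgY_eq : ∀ ω, g (Y ω) = max (g |X ω|) (g c) := by
    intro ω
    rcases le_total (|X ω|) c with h | h
    · rw [show Y ω = c from max_eq_right h,
        max_eq_right (hmono (Set.mem_Ici.2 (abs_nonneg _)) (Set.mem_Ici.2 hc) h)]
    · rw [show Y ω = |X ω| from max_eq_left h,
        max_eq_left (hmono (Set.mem_Ici.2 hc) (Set.mem_Ici.2 (abs_nonneg _)) h)]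
  have hgYint : Integrable (fun ω => g (Y ω)) P := by
    have : Integrable (fun ω => max (g |X ω|) (g c)) P := hgX.sup (integrable_const _)
    exact this.congr (Filter.Eventually.of_forall fun ω => (hgY_eq ω).symm)
  set m : ℝ := ∫ ω, Y ω ∂P with hm
  have hcm : c ≤ m := by
    have : ∫ _ω, c ∂P ≤ ∫ ω, Y ω ∂P :=
      integral_mono (integrable_const c) hYint fun ω => hYc ω
    simpa using this
  have hmnn : 0 ≤ m := le_trans hc hcm
  set R : ℝ := (∫ ω, |X ω| ∂P) + c * (P {ω | |X ω| < c}).toReal with hR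
  have hXnn : 0 ≤ ∫ ω, |X ω| ∂P := integral_nonneg fun ω => abs_nonneg _
  have hRnn : 0 ≤ R := by positivity
  -- m ≤ R
  have hmR : m ≤ R := by
    rcases eq_or_lt_of_le hc with hc0 | hc0
    · have : Y = fun ω => |X ω| := by
        funext ω; rw [hYdef]; simp [← hc0, abs_nonneg]
      rw [hR, hm, this, ← hc0]; simp
    · set f : Ω → ℝ := fun ω => (Y ω - |X ω|) / c with hf
      have hfint : Integrable f P := ((hYint.sub hX.abs).div_const c)
      have hfnn : 0 ≤ ∫ ω, f ω ∂P :=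
        integral_nonneg fun ω => div_nonneg (by linarith [hYX ω]) hc
      have key : ENNReal.ofReal (∫ ω, f ω ∂P) ≤ P {ω | |X ω| < c} := by
        apply integral_le_measure
        · intro ω hω
          have hYω : Y ω = c := max_eq_right (le_of_lt hω)
          show (Y ω - |X ω|) / c ≤ 1
          rw [hYω, div_le_one hc0]
          linarith [abs_nonneg (X ω)]
        · intro ω hω
          simp only [Set.mem_compl_iff, Set.mem_setOf_eq, not_lt] at hω
          have hYω : Y ω = |X ω| := max_eq_left hω
          show (Y ω - |X ω|) / c ≤ 0
          rw [hYω]; simp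
      have key2 : ∫ ω, f ω ∂P ≤ (P {ω | |X ω| < c}).toReal := by
        have := ENNReal.toReal_mono (measure_ne_top P _) key
        rwa [ENNReal.toReal_ofReal hfnn] at this
      have hsub : ∫ ω, f ω ∂P = (m - ∫ ω, |X ω| ∂P) / c := by
        rw [hf, integral_div, integral_sub hYint hX.abs]
      rw [hsub, div_le_iff₀ hc0] at key2
      rw [hR]; linarith [key2]
  -- ∫ g(Y) ≤ g m
  have hJensen : ∫ ω, g (Y ω) ∂P ≤ g m := by
    rcases eq_or_lt_of_le hcm with hcm' | hcm'
    · -- Y = c a.e.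
      have hz : ∫ ω, (Y ω - c) ∂P = 0 := by
        rw [integral_sub hYint (integrable_const c)]; simp [← hm, ← hcm']
      have hsint : Integrable (fun ω => Y ω - c) P := hYint.sub (integrable_const c)
      have hae : (fun ω => Y ω - c) =ᵐ[P] 0 :=
        (integral_eq_zero_iff_of_nonneg (fun ω => by simp [sub_nonneg, hYc ω]) hsint).mp hz
      have hgc : (fun ω => g (Y ω)) =ᵐ[P] fun _ => g c := by
        filter_upwards [hae] with ω hω
        have : Y ω = c := by simpa [sub_eq_zero] using hω
        rw [this]
      rw [integral_congr_ae hgc, ← hcm']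
      simp
    · obtain ⟨a, ha⟩ := aux_support_line hconc hcm'
      have hsint : Integrable (fun ω => Y ω - m) P := hYint.sub (integrable_const m)
      have haint : Integrable (fun ω => a * (Y ω - m)) P := hsint.const_mul a
      have hle : ∫ ω, g (Y ω) ∂P ≤ ∫ ω, (g m + a * (Y ω - m)) ∂P := by
        apply integral_mono hgYint
        · exact (integrable_const (g m)).add haint
        · exact fun ω => ha (Y ω) (hYc ω)
      have heq : ∫ ω, (g m + a * (Y ω - m)) ∂P = g m := by
        rw [integral_add (integrable_const _) haint,
          integral_const_mul, integral_sub hYint (integrable_const m)]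
        simp [← hm]
      rw [heq] at hle
      exact hle
  -- chain
  calc ∫ ω, g |X ω| ∂P ≤ ∫ ω, g (Y ω) ∂P := by
        apply integral_mono hgX hgYint
        intro ω
        exact hmono (Set.mem_Ici.2 (abs_nonneg _)) (Set.mem_Ici.2 (hYnn ω)) (hYX ω)
    _ ≤ g m := hJensen
    _ ≤ g R := hmono (Set.mem_Ici.2 hmnn) (Set.mem_Ici.2 hRnn) hmR
end

section
/- Let f, f₀ : X → ℝ be measurable functions with values in [0,1] and η : X → [0,1] measurable, where f₀(x) = 1 whenever 1 - 2η(x) < 0, f₀(x) = 0 whenever 1 - 2η(x) > 0. Let P be a probability measure on X. Then for every v ∈ [0,1], E_P[|(f - f₀)(1 - 2η)|] ≥ v·E_P[|f - f₀|] - v·P(|1 - 2η| < v). -/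
/-! Pointwise, `v * |g| ≤ |g * h|` wherever `|h| ≥ v`, while on the set where `|h| < v` the bound
`|g| ≤ 1` gives `v * |g| ≤ v`. Hence `v * |g| ≤ |g * h| + v * 1{|h| < v}`, and integrating against
a finite measure yields `v * E|g| - v * P(|h| < v) ≤ E|g * h|`. -/

open MeasureTheory

theorem mul_abs_le_abs_mul_add_ite {a b v : ℝ} (ha : |a| ≤ 1) :
    v * |a| ≤ |a * b| + if |b| < v then v else 0 := by
  rw [abs_mul]
  split_ifs with hb
  · nlinarith [abs_nonneg a, abs_nonneg b]
  · nlinarith [abs_nonneg a]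

theorem sub_measureReal_le_integral_abs_mul {X : Type*} [MeasurableSpace X] {P : Measure X}
    [IsFiniteMeasure P] {g h : X → ℝ} (hg : Integrable g P) (hg1 : ∀ x, |g x| ≤ 1)
    (hh : Measurable h) (hgh : Integrable (fun x => g x * h x) P) (v : ℝ) :
    v * ∫ x, |g x| ∂P - v * P.real {x | |h x| < v} ≤ ∫ x, |g x * h x| ∂P := by
  set S := {x | |h x| < v}
  have hS : MeasurableSet S := measurableSet_lt hh.abs measurable_const
  have hind : Integrable (S.indicator fun _ => v) P := (integrable_const v).indicator hS
  have hpoint : ∀ x, v * |g x| ≤ |g x * h x| + S.indicator (fun _ => v) x := fun x => by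
    simpa only [Set.indicator_apply, S, Set.mem_ofPred_eq] using
      mul_abs_le_abs_mul_add_ite (b := h x) (v := v) (hg1 x)
  calc v * ∫ x, |g x| ∂P - v * P.real S
      = ∫ x, v * |g x| ∂P - ∫ x, S.indicator (fun _ => v) x ∂P := by
        rw [integral_const_mul, integral_indicator_const v hS, smul_eq_mul, mul_comm (P.real S)]
    _ ≤ ∫ x, |g x * h x| ∂P := by
        rw [sub_le_iff_le_add, ← integral_add hgh.abs hind]
        exact integral_mono (hg.abs.const_mul v) (hgh.abs.add hind) hpoint

theorem stmt_11_general {X : Type*} [MeasurableSpace X] (P : Measure X) [IsProbabilityMeasure P]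
    (f f₀ η : X → ℝ)
    (hf : Measurable f) (hf₀ : Measurable f₀) (hη : Measurable η)
    (hf01 : ∀ x, f x ∈ Set.Icc (0 : ℝ) 1)
    (hf₀01 : ∀ x, f₀ x ∈ Set.Icc (0 : ℝ) 1)
    (hη01 : ∀ x, η x ∈ Set.Icc (0 : ℝ) 1)
    (v : ℝ) :
    v * (∫ x, |f x - f₀ x| ∂P) - v * (P {x | |1 - 2 * η x| < v}).toReal
      ≤ ∫ x, |(f x - f₀ x) * (1 - 2 * η x)| ∂P := by
  have hdiff : ∀ x, |f x - f₀ x| ≤ 1 := fun x =>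
    abs_sub_le_of_nonneg_of_le (hf01 x).1 (hf01 x).2 (hf₀01 x).1 (hf₀01 x).2
  have hmargin : ∀ x, |1 - 2 * η x| ≤ 1 := fun x => by
    obtain ⟨_, _⟩ := hη01 x
    exact abs_le.2 ⟨by linarith, by linarith⟩
  have hh : Measurable fun x => 1 - 2 * η x := measurable_const.sub (hη.const_mul 2)
  have hg : Integrable (fun x => f x - f₀ x) P :=
    .of_bound (hf.sub hf₀).aestronglyMeasurable 1 (.of_forall hdiff)
  have hgh : Integrable (fun x => (f x - f₀ x) * (1 - 2 * η x)) P :=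
    .of_bound ((hf.sub hf₀).mul hh).aestronglyMeasurable 1 (.of_forall fun x => by
      simpa only [Real.norm_eq_abs, abs_mul] using
        mul_le_one₀ (hdiff x) (abs_nonneg _) (hmargin x))
  exact sub_measureReal_le_integral_abs_mul hg hdiff hh hgh v

theorem stmt_11 {X : Type*} [MeasurableSpace X] (P : Measure X) [IsProbabilityMeasure P]
    (f f₀ η : X → ℝ)
    (hf : Measurable f) (hf₀ : Measurable f₀) (hη : Measurable η)
    (hf01 : ∀ x, f x ∈ Set.Icc (0 : ℝ) 1)
    (hf₀01 : ∀ x, f₀ x ∈ Set.Icc (0 : ℝ) 1)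
    (hη01 : ∀ x, η x ∈ Set.Icc (0 : ℝ) 1)
    (hBayes1 : ∀ x, 1 - 2 * η x < 0 → f₀ x = 1)
    (hBayes0 : ∀ x, 0 < 1 - 2 * η x → f₀ x = 0)
    (v : ℝ) (hv : v ∈ Set.Icc (0 : ℝ) 1) :
    v * (∫ x, |f x - f₀ x| ∂P) - v * (P {x | |1 - 2 * η x| < v}).toReal
      ≤ ∫ x, |(f x - f₀ x) * (1 - 2 * η x)| ∂P :=
  stmt_11_general P f f₀ η hf hf₀ hη hf01 hf₀01 hη01 v
end

section
/- Let Y be a real random variable, let m ≥ 1, and fix L > 0 with E[exp(|Y|/L)] ≤ b for some b ≥ e^(m-1). Then (E[|Y|^m])^(1/m) ≤ L·log(b - 1 + e^(m-1)). -/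
open MeasureTheory

/-- Sign lemma, increasing part: for `m-1 ≤ s ≤ u`, `u^(m-1) ≤ s^(m-1) * exp (u-s)`. -/
lemma aux_sign_pos (m s u : ℝ) (hm : 1 ≤ m) (hs : m - 1 ≤ s) (hsu : s ≤ u) :
    u ^ (m - 1) ≤ s ^ (m - 1) * Real.exp (u - s) := by
  rcases eq_or_lt_of_le hm with h1 | h1
  · rw [← h1]
    simp only [sub_self, Real.rpow_zero, one_mul]
    exact Real.one_le_exp (by linarith)
  · have hs0 : 0 < s := by linarith
    have hu0 : 0 < u := by linarith
    rw [Real.rpow_def_of_pos hu0, Real.rpow_def_of_pos hs0, ← Real.exp_add, Real.exp_le_exp]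
    have hlog : Real.log u - Real.log s ≤ (u - s) / s := by
      have h2 := Real.log_le_sub_one_of_pos (show (0:ℝ) < u / s by positivity)
      rw [Real.log_div (ne_of_gt hu0) (ne_of_gt hs0)] at h2
      have : u / s - 1 = (u - s) / s := by field_simp
      linarith
    have h3 : (m - 1) * (Real.log u - Real.log s) ≤ (m - 1) * ((u - s) / s) :=
      mul_le_mul_of_nonneg_left hlog (by linarith)
    have h4 : (m - 1) * ((u - s) / s) ≤ s * ((u - s) / s) :=
      mul_le_mul_of_nonneg_right hs (div_nonneg (by linarith) hs0.le)
    have h5 : s * ((u - s) / s) = u - s := by field_simp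
    nlinarith

/-- Sign lemma, decreasing part: for `m-1 ≤ u ≤ s`, `s^(m-1) * exp (u-s) ≤ u^(m-1)`. -/
lemma aux_sign_neg (m s u : ℝ) (hm : 1 ≤ m) (hu : m - 1 ≤ u) (hus : u ≤ s) :
    s ^ (m - 1) * Real.exp (u - s) ≤ u ^ (m - 1) := by
  rcases eq_or_lt_of_le hm with h1 | h1
  · rw [← h1]
    simp only [sub_self, Real.rpow_zero, one_mul]
    exact Real.exp_le_one_iff.2 (by linarith)
  · have hu0 : 0 < u := by linarith
    have hs0 : 0 < s := by linarith
    rw [Real.rpow_def_of_pos hu0, Real.rpow_def_of_pos hs0, ← Real.exp_add, Real.exp_le_exp]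
    have hlog : Real.log s - Real.log u ≤ (s - u) / u := by
      have h2 := Real.log_le_sub_one_of_pos (show (0:ℝ) < s / u by positivity)
      rw [Real.log_div (ne_of_gt hs0) (ne_of_gt hu0)] at h2
      have : s / u - 1 = (s - u) / u := by field_simp
      linarith
    have h3 : (m - 1) * (Real.log s - Real.log u) ≤ (m - 1) * ((s - u) / u) :=
      mul_le_mul_of_nonneg_left hlog (by linarith)
    have h4 : (m - 1) * ((s - u) / u) ≤ u * ((s - u) / u) :=
      mul_le_mul_of_nonneg_right hu (div_nonneg (by linarith) hu0.le)
    have h5 : u * ((s - u) / u) = s - u := by field_simp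
    nlinarith

/-- Tangent line inequality for the concave function `y ↦ (log y)^m` on `[e^(m-1), ∞)`,
written in the variables `t = log y`, `s = log c`. -/
lemma aux_core (m s t : ℝ) (hm : 1 ≤ m) (hs : m - 1 ≤ s) (ht : m - 1 ≤ t) :
    t ^ m ≤ s ^ m + m * s ^ (m - 1) * Real.exp (t - s) - m * s ^ (m - 1) := by
  set F : ℝ → ℝ := fun u => m * s ^ (m - 1) * Real.exp (u - s) - u ^ m with hF
  have hm0 : (0:ℝ) < m := by linarith
  have hderiv : ∀ u : ℝ, HasDerivAt F
      (m * s ^ (m - 1) * Real.exp (u - s) - m * u ^ (m - 1)) u := by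
    intro u
    have h1 : HasDerivAt (fun u : ℝ => Real.exp (u - s)) (Real.exp (u - s)) u := by
      simpa using ((hasDerivAt_id u).sub_const s).exp
    have h2 : HasDerivAt (fun u : ℝ => u ^ m) (m * u ^ (m - 1)) u :=
      Real.hasDerivAt_rpow_const (Or.inr hm)
    exact (h1.const_mul (m * s ^ (m - 1))).sub h2
  have hdiff : ∀ u : ℝ, DifferentiableAt ℝ F u := fun u => (hderiv u).differentiableAt
  have hderiv' : ∀ u : ℝ, deriv F u = m * s ^ (m - 1) * Real.exp (u - s) - m * u ^ (m - 1) :=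
    fun u => (hderiv u).deriv
  have key : F s ≤ F t := by
    rcases le_total s t with hst | hts
    · have hmono : MonotoneOn F (Set.Icc s t) := by
        apply monotoneOn_of_deriv_nonneg (convex_Icc s t)
          (fun u _ => (hdiff u).continuousAt.continuousWithinAt)
          (fun u _ => (hdiff u).differentiableWithinAt)
        intro u hu
        rw [interior_Icc] at hu
        rw [hderiv']
        have := aux_sign_pos m s u hm hs hu.1.le
        nlinarith
      exact hmono (Set.left_mem_Icc.2 hst) (Set.right_mem_Icc.2 hst) hst
    · have hanti : AntitoneOn F (Set.Icc t s) := by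
        apply antitoneOn_of_deriv_nonpos (convex_Icc t s)
          (fun u _ => (hdiff u).continuousAt.continuousWithinAt)
          (fun u _ => (hdiff u).differentiableWithinAt)
        intro u hu
        rw [interior_Icc] at hu
        rw [hderiv']
        have := aux_sign_neg m s u hm (le_trans ht hu.1.le) hu.2.le
        nlinarith
      exact hanti (Set.left_mem_Icc.2 hts) (Set.right_mem_Icc.2 hts) hts
  have hFs : F s = m * s ^ (m - 1) - s ^ m := by simp [hF]
  have hFt : F t = m * s ^ (m - 1) * Real.exp (t - s) - t ^ m := by simp [hF]
  rw [hFs, hFt] at key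
  linarith

/-- Pointwise inequality to be integrated. -/
lemma aux_ptwise (m s x : ℝ) (hm : 1 ≤ m) (hs : m - 1 ≤ s) (hx : 0 ≤ x) :
    x ^ m ≤ s ^ m + m * s ^ (m - 1) * Real.exp (-s) *
      (Real.exp x - 1 + Real.exp (m - 1) - Real.exp s) := by
  have he1 : (1:ℝ) ≤ Real.exp (m - 1) := Real.one_le_exp (by linarith)
  have hpos : 0 < Real.exp x - 1 + Real.exp (m - 1) := by
    nlinarith [Real.exp_pos x]
  set t := Real.log (Real.exp x - 1 + Real.exp (m - 1)) with htdef
  have het : Real.exp t = Real.exp x - 1 + Real.exp (m - 1) := Real.exp_log hpos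
  have hxt : x ≤ t := by
    have : Real.exp x ≤ Real.exp t := by rw [het]; linarith
    exact (Real.exp_le_exp.1 this)
  have hmt : m - 1 ≤ t := by
    have : Real.exp (m - 1) ≤ Real.exp t := by rw [het]; nlinarith [Real.one_le_exp hx]
    exact (Real.exp_le_exp.1 this)
  have h1 : x ^ m ≤ t ^ m := Real.rpow_le_rpow hx hxt (by linarith)
  have h2 := aux_core m s t hm hs hmt
  have h3 : m * s ^ (m - 1) * Real.exp (t - s) =
      m * s ^ (m - 1) * Real.exp (-s) * (Real.exp x - 1 + Real.exp (m - 1)) := by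
    rw [← het, Real.exp_sub, Real.exp_neg]
    ring
  have h4 : m * s ^ (m - 1) * Real.exp (-s) * Real.exp s = m * s ^ (m - 1) := by
    rw [mul_assoc, ← Real.exp_add]; simp
  nlinarith

theorem stmt_16 {Ω : Type*} [MeasurableSpace Ω] (P : Measure Ω) [IsProbabilityMeasure P]
    (Y : Ω → ℝ) (hY : Measurable Y) (L m b : ℝ) (hL : 0 < L) (hm : 1 ≤ m)
    (hb : Real.exp (m - 1) ≤ b)
    (hexpint : Integrable (fun ω => Real.exp (|Y ω| / L)) P)
    (hexp : ∫ ω, Real.exp (|Y ω| / L) ∂P ≤ b) :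
    (∫ ω, |Y ω| ^ m ∂P) ^ (1 / m) ≤ L * Real.log (b - 1 + Real.exp (m - 1)) := by
  have he1 : (1:ℝ) ≤ Real.exp (m - 1) := Real.one_le_exp (by linarith)
  have hb1 : (1:ℝ) ≤ b := le_trans he1 hb
  have hc : (0:ℝ) < b - 1 + Real.exp (m - 1) := by linarith
  set s := Real.log (b - 1 + Real.exp (m - 1)) with hsdef
  have hes : Real.exp s = b - 1 + Real.exp (m - 1) := Real.exp_log hc
  have hs : m - 1 ≤ s := by
    have : Real.exp (m - 1) ≤ Real.exp s := by rw [hes]; linarith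
    exact Real.exp_le_exp.1 this
  have hs0 : (0:ℝ) ≤ s := by linarith
  set K := m * s ^ (m - 1) * Real.exp (-s) with hKdef
  have hK : 0 ≤ K := by
    have := Real.rpow_nonneg hs0 (m - 1)
    positivity
  set f : Ω → ℝ := fun ω => (|Y ω| / L) ^ m with hfdef
  set g : Ω → ℝ := fun ω =>
    s ^ m + K * (Real.exp (|Y ω| / L) - 1 + Real.exp (m - 1) - Real.exp s) with hgdef
  have hpt : ∀ ω, f ω ≤ g ω := fun ω =>
    aux_ptwise m s (|Y ω| / L) hm hs (by positivity)
  have hgeq : g = fun ω => K * Real.exp (|Y ω| / L) +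
      (s ^ m + K * (-1 + Real.exp (m - 1) - Real.exp s)) := by
    funext ω; rw [hgdef]; ring
  have hgint : Integrable g P := by
    rw [hgeq]; exact (hexpint.const_mul K).add (integrable_const _)
  have hfmeas : Measurable f :=
    (Real.continuous_rpow_const (by linarith : (0:ℝ) ≤ m)).measurable.comp
      (hY.abs.div_const L)
  have hfnn : ∀ ω, 0 ≤ f ω := fun ω => Real.rpow_nonneg (by positivity) m
  have hfint : Integrable f P := by
    apply hgint.mono' hfmeas.aestronglyMeasurable
    filter_upwards with ω
    rw [Real.norm_eq_abs, abs_of_nonneg (hfnn ω)]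
    exact hpt ω
  have hintg : ∫ ω, g ω ∂P = s ^ m +
      K * ((∫ ω, Real.exp (|Y ω| / L) ∂P) - 1 + Real.exp (m - 1) - Real.exp s) := by
    rw [hgeq, integral_add (hexpint.const_mul K) (integrable_const _),
      integral_const_mul, integral_const]
    simp [measure_univ]
    ring
  have hgle : ∫ ω, g ω ∂P ≤ s ^ m := by
    rw [hintg]
    have h1 : (∫ ω, Real.exp (|Y ω| / L) ∂P) - 1 + Real.exp (m - 1) - Real.exp s ≤ 0 := by
      rw [hes]; linarith
    nlinarith
  have hfle : ∫ ω, f ω ∂P ≤ s ^ m :=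
    le_trans (integral_mono hfint hgint hpt) hgle
  have heq : ∀ ω, |Y ω| ^ m = L ^ m * f ω := by
    intro ω
    rw [hfdef]
    rw [← Real.mul_rpow hL.le (by positivity)]
    congr 1
    field_simp
  have hint_eq : ∫ ω, |Y ω| ^ m ∂P = L ^ m * ∫ ω, f ω ∂P := by
    simp_rw [heq]
    exact integral_const_mul _ _
  have h1 : ∫ ω, |Y ω| ^ m ∂P ≤ (L * s) ^ m := by
    rw [hint_eq, Real.mul_rpow hL.le hs0]
    exact mul_le_mul_of_nonneg_left hfle (Real.rpow_nonneg hL.le m)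
  have hnn : 0 ≤ ∫ ω, |Y ω| ^ m ∂P :=
    integral_nonneg fun ω => Real.rpow_nonneg (abs_nonneg _) m
  have h2 : (∫ ω, |Y ω| ^ m ∂P) ^ (1 / m) ≤ ((L * s) ^ m) ^ (1 / m) :=
    Real.rpow_le_rpow hnn h1 (by positivity)
  calc (∫ ω, |Y ω| ^ m ∂P) ^ (1 / m) ≤ ((L * s) ^ m) ^ (1 / m) := h2
    _ = L * s := by
        rw [← Real.rpow_mul (by positivity), mul_one_div, div_self (by linarith : m ≠ 0),
          Real.rpow_one]
end
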